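/- arXiv:1806.03703 — 2 statements merged into one kernel-verified Lean document; each statement's English description precedes it below -/
import Mathlib

section
/- Let τ = {nop} ∪ ω be a type of nets with ω ⊆ {used, free}. A reduced TS A (every event labels at least one transition) is τ-feasible if and only if A has exactly one state. -/
/-! Boolean interactions -/

abbrev Interaction := Bool → Option Bool

def iNop : Interaction := fun b => some b
def iInp : Interaction := fun b => if b then some false else none
def iOut : Interaction := fun b => if b then none else some true
def iSet : Interaction := fun _ => some true
def iRes : Interaction := fun _ => some false
def iSwap : Interaction := fun b => some (!b)
def iUsed : Interaction := fun b => if b then some true else none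
def iFree : Interaction := fun b => if b then none else some false

def allInteractions : Set Interaction :=
  {iNop, iInp, iOut, iSet, iRes, iSwap, iUsed, iFree}

/-! Transition systems and regions -/

structure TS (S E : Type) where
  delta : S → E → Option S
  init : S

def IsRegion {S E : Type} (A : TS S E) (τ : Set Interaction)
    (sup : S → Bool) (sig : E → Interaction) : Prop :=
  (∀ e, sig e ∈ τ) ∧
  ∀ s e s', A.delta s e = some s' → sig e (sup s) = some (sup s')

def Separable {S E : Type} (A : TS S E) (τ : Set Interaction) (s s' : S) : Prop :=
  ∃ sup sig, IsRegion A τ sup sig ∧ sup s ≠ sup s'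

def Inhibitable {S E : Type} (A : TS S E) (τ : Set Interaction) (e : E) (s : S) : Prop :=
  ∃ sup sig, IsRegion A τ sup sig ∧ sig e (sup s) = none

def SSP {S E : Type} (A : TS S E) (τ : Set Interaction) : Prop :=
  ∀ s s' : S, s ≠ s' → Separable A τ s s'

def ESSP {S E : Type} (A : TS S E) (τ : Set Interaction) : Prop :=
  ∀ (s : S) (e : E), A.delta s e = none → Inhibitable A τ e s

def Feasible {S E : Type} (A : TS S E) (τ : Set Interaction) : Prop :=
  SSP A τ ∧ ESSP A τ

def Reachable {S E : Type} (A : TS S E) : Prop :=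
  ∀ s : S, Relation.ReflTransGen (fun x y => ∃ e, A.delta x e = some y) A.init s

/-! Every interaction in {nop, used, free} returns its argument wherever it is defined, so the
support of every region is constant along transitions and hence, by reachability, constant on
all states: no two states can be separated. Conversely, in a one-state TS separation is vacuous,
and a reduced one-state TS has every event enabled at its only state, so inhibition is vacuous
too. -/

def Preserving (f : Interaction) : Prop :=
  ∀ b b', f b = some b' → b' = b

lemma preserving_of_mem_nop_union {ω : Set Interaction} (hω : ω ⊆ {iUsed, iFree})
    {f : Interaction} (hf : f ∈ {iNop} ∪ ω) : Preserving f := by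
  have hf' : f = iNop ∨ f = iUsed ∨ f = iFree := by
    rcases hf with hf | hf
    · exact Or.inl hf
    · exact Or.inr (hω hf)
  intro b b' h
  rcases hf' with rfl | rfl | rfl <;> cases b <;> simp_all [iNop, iUsed, iFree]

section

variable {S E : Type} {A : TS S E} {τ : Set Interaction}

lemma IsRegion.sup_eq_of_reflTransGen {sup : S → Bool} {sig : E → Interaction}
    (hreg : IsRegion A τ sup sig) (hτ : ∀ f ∈ τ, Preserving f) {s t : S}
    (hst : Relation.ReflTransGen (fun x y => ∃ e, A.delta x e = some y) s t) :
    sup t = sup s := by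
  induction hst with
  | refl => rfl
  | tail _ hstep ih =>
    obtain ⟨e, he⟩ := hstep
    exact (hτ _ (hreg.1 e) _ _ (hreg.2 _ e _ he)).trans ih

lemma not_separable_of_preserving (hreach : Reachable A) (hτ : ∀ f ∈ τ, Preserving f)
    (s s' : S) : ¬ Separable A τ s s' := by
  rintro ⟨sup, sig, hreg, hsep⟩
  exact hsep ((hreg.sup_eq_of_reflTransGen hτ (hreach s)).trans
    (hreg.sup_eq_of_reflTransGen hτ (hreach s')).symm)

lemma SSP.subsingleton_of_preserving (hssp : SSP A τ) (hreach : Reachable A)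
    (hτ : ∀ f ∈ τ, Preserving f) : Subsingleton S :=
  ⟨fun s s' => by_contra fun hne => not_separable_of_preserving hreach hτ s s' (hssp s s' hne)⟩

lemma feasible_of_subsingleton [Subsingleton S]
    (hreduced : ∀ e : E, ∃ s s', A.delta s e = some s') : Feasible A τ := by
  refine ⟨fun s s' hne => absurd (Subsingleton.elim s s') hne, fun s e hnone => ?_⟩
  obtain ⟨s₁, s₂, h⟩ := hreduced e
  rw [Subsingleton.elim s₁ s, hnone] at h
  cases h

end

theorem reduced_feasible_iff_one_state_nop_general {S E : Type} [Fintype S]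
    (A : TS S E) (hreach : Reachable A)
    (hreduced : ∀ e : E, ∃ s s', A.delta s e = some s')
    (ω : Set Interaction) (hω : ω ⊆ {iUsed, iFree}) :
    Feasible A ({iNop} ∪ ω) ↔ Fintype.card S = 1 := by
  have hτ : ∀ f ∈ {iNop} ∪ ω, Preserving f := fun _ hf => preserving_of_mem_nop_union hω hf
  constructor
  · rintro ⟨hssp, -⟩
    have hsub : Subsingleton S := hssp.subsingleton_of_preserving hreach hτ
    have : Nonempty S := ⟨A.init⟩
    exact le_antisymm (Fintype.card_le_one_iff_subsingleton.2 hsub) Fintype.card_pos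
  · intro hcard
    have : Subsingleton S := Fintype.card_le_one_iff_subsingleton.1 hcard.le
    exact feasible_of_subsingleton hreduced

/-- for τ = {nop} ∪ ω with ω ⊆ {used, free},
a reduced TS is τ-feasible iff it has exactly one state. -/
theorem reduced_feasible_iff_one_state_nop {S E : Type} [Fintype S] [Fintype E]
    (A : TS S E) (hreach : Reachable A)
    (hreduced : ∀ e : E, ∃ s s', A.delta s e = some s')
    (ω : Set Interaction) (hω : ω ⊆ {iUsed, iFree}) :
    Feasible A ({iNop} ∪ ω) ↔ Fintype.card S = 1 :=
  reduced_feasible_iff_one_state_nop_general A hreach hreduced ω hω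
end

section
/- Let τ = {nop, inp, free} or τ = {nop, inp, used, free}, and let φ be a cubic monotone 3-CNF with m clauses. If the key event k is τ-inhibitable at the key state q in the TS A_φ, then A_φ has the τ-ESSP and the τ-SSP. -/
/-! The TS A_φ for a cubic monotone 3-CNF φ with m clauses.  The clauses are
given by a map X : Fin m → Fin 3 → V listing the three variables X_{i,0},
X_{i,1}, X_{i,2} of every clause ζ_i. -/

inductive PState (m : ℕ) where
  | s0 | s1 | q
  | t (i : Fin m) (j : Fin 9)

inductive PEvent (m : ℕ) (V : Type) where
  | k | h
  | hc (i : Fin m)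
  | r (i : Fin m)
  | var (v : V)

/-- The clause gadget of clause i: for each permutation (α, β, γ) of {0,1,2}
there is a path labeled X_{i,α}, X_{i,β}, X_{i,γ} from t_{i,0} to t_{i,5}. -/
def gadget {m : ℕ} {V : Type} [DecidableEq V] (X : Fin m → Fin 3 → V)
    (i : Fin m) (j : Fin 9) (v : V) : Option (PState m) :=
  if j = 0 then
    if v = X i 0 then some (.t i 1)
    else if v = X i 1 then some (.t i 7)
    else if v = X i 2 then some (.t i 3) else none
  else if j = 1 then
    if v = X i 1 then some (.t i 2)
    else if v = X i 2 then some (.t i 4) else none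
  else if j = 2 then
    if v = X i 2 then some (.t i 5) else none
  else if j = 3 then
    if v = X i 0 then some (.t i 4)
    else if v = X i 1 then some (.t i 6) else none
  else if j = 4 then
    if v = X i 1 then some (.t i 5) else none
  else if j = 6 then
    if v = X i 0 then some (.t i 5) else none
  else if j = 7 then
    if v = X i 0 then some (.t i 2)
    else if v = X i 2 then some (.t i 6) else none
  else none

def Aphi {m : ℕ} {V : Type} [DecidableEq V] (X : Fin m → Fin 3 → V) :
    TS (PState m) (PEvent m V) where
  delta := fun s e =>
    match s, e with
    | .s0, .k => some .s1
    | .s0, .h => some .q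
    | .s0, .r i => some (.t i 0)
    | .s1, .r i => some (.t i 8)
    | .q, .hc i => some (.t i 5)
    | .t i j, .k => if j = 0 then some (.t i 8) else none
    | .t i j, .var v => gadget X i j v
    | _, _ => none
  init := .s0

/-- φ is a cubic monotone 3-CNF: each clause consists of three distinct
variables and every variable is a member of exactly three clauses. -/
def CubicMonotone {m : ℕ} {V : Type} [DecidableEq V] [Fintype V]
    (X : Fin m → Fin 3 → V) : Prop :=
  (∀ i : Fin m, Function.Injective (X i)) ∧
  (∀ v : V,
    (Finset.univ.filter (fun p : Fin m × Fin 3 => X p.1 p.2 = v)).card = 3)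

/-- M is a one-in-three model of φ: it hits every clause exactly once. -/
def OneInThree {m : ℕ} {V : Type} (X : Fin m → Fin 3 → V) (M : Set V) : Prop :=
  ∀ i : Fin m, ∃! j : Fin 3, X i j ∈ M

section Interactions

variable {f : Interaction} {x y : Bool}

lemma iInp_eq_some : iInp x = some y ↔ x = true ∧ y = false := by
  cases x <;> cases y <;> simp [iInp]

lemma le_of_apply_eq_some (hf : f ∈ ({iNop, iInp, iUsed, iFree} : Set Interaction))
    (h : f x = some y) : y ≤ x := by
  rcases hf with rfl | rfl | rfl | rfl <;> cases x <;> cases y <;>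
    simp_all [iNop, iInp, iUsed, iFree]

lemma eq_iInp_iff_of_apply_eq_some (hf : f ∈ ({iNop, iInp, iUsed, iFree} : Set Interaction))
    (h : f x = some y) : f = iInp ↔ x = true ∧ y = false := by
  refine ⟨fun hinp => iInp_eq_some.1 (hinp ▸ h), ?_⟩
  rintro ⟨rfl, rfl⟩
  rcases hf with rfl | rfl | rfl | rfl <;> simp_all [iNop, iUsed, iFree]

end Interactions

lemma Fin.existsUnique_drop {n : ℕ} {b : Fin (n + 1) → Bool}
    (hb : ∀ p : Fin n, b p.succ ≤ b p.castSucc) (h0 : b 0 = true)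
    (hlast : b (Fin.last n) = false) :
    ∃! p : Fin n, b p.castSucc = true ∧ b p.succ = false := by
  refine existsUnique_of_exists_of_unique ?_ ?_
  · by_contra! h
    have hall : ∀ j, b j = true := Fin.induction h0 fun p hp => by simpa using h p hp
    simp [hall] at hlast
  · have anti : Antitone b := Fin.antitone_iff_succ_le.2 hb
    rintro p p' ⟨hp, hp'⟩ ⟨hq, hq'⟩
    by_contra hne
    rcases lt_or_gt_of_ne hne with hlt | hlt
    · simpa [hp', hq, Bool.le_iff_imp] using anti (Fin.succ_le_castSucc_iff.2 hlt)
    · simpa [hq', hp, Bool.le_iff_imp] using anti (Fin.succ_le_castSucc_iff.2 hlt)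

/-- The gadget of a clause is the cube of subsets of its three positions: for `j ≠ 8`, the state
`t_{i,j}` is the vertex `gadgetVertex j`, the set of positions whose variable every path from
`t_{i,0}` to `t_{i,j}` has read. The value at `8` is irrelevant: `t_{i,8}` is not in the gadget. -/
def gadgetVertex : Fin 9 → Finset (Fin 3) :=
  ![∅, {0}, {0, 1}, {2}, {0, 2}, Finset.univ, {1, 2}, {1}, Finset.univ]

def GadgetStep (p : Fin 3) (j j' : Fin 9) : Prop :=
  j ≠ 8 ∧ j' ≠ 8 ∧ p ∉ gadgetVertex j ∧ gadgetVertex j' = insert p (gadgetVertex j)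

instance (p : Fin 3) (j j' : Fin 9) : Decidable (GadgetStep p j j') :=
  inferInstanceAs (Decidable (_ ∧ _))

lemma gadgetVertex_inj {j j' : Fin 9} (hj : j ≠ 8) (hj' : j' ≠ 8)
    (h : gadgetVertex j = gadgetVertex j') : j = j' := by
  revert j j'; decide

section Gadget

variable {m : ℕ} {V : Type} [DecidableEq V] {X : Fin m → Fin 3 → V} {i : Fin m}

lemma gadget_eq_some {j : Fin 9} {v : V} {s' : PState m} (h : gadget X i j v = some s') :
    ∃ p j', v = X i p ∧ s' = .t i j' ∧ GadgetStep p j j' := by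
  unfold gadget at h
  split_ifs at h <;> cases h <;> subst_vars <;> exact ⟨_, _, rfl, rfl, by decide⟩

lemma gadget_ne_none (hX : Function.Injective (X i)) {j : Fin 9} {p : Fin 3} (hj : j ≠ 8)
    (hp : p ∉ gadgetVertex j) : gadget X i j (X i p) ≠ none := by
  fin_cases p <;> fin_cases j <;> simp_all [gadget, gadgetVertex, hX.eq_iff]

end Gadget

section KeyRegion

variable {m : ℕ} {V : Type} [DecidableEq V] {X : Fin m → Fin 3 → V} {τ : Set Interaction}

theorem exists_oneInThree_of_inhibitable_key [Fintype V]
    (hτ : τ ⊆ {iNop, iInp, iUsed, iFree}) (hkey : Inhibitable (Aphi X) τ .k .q) :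
    ∃ M : Finset V, OneInThree X M := by
  classical
  obtain ⟨sup, sig, ⟨hmem, htr⟩, hk⟩ := hkey
  have noRise : ∀ {s e s'}, (Aphi X).delta s e = some s' → sup s' ≤ sup s :=
    fun hd => le_of_apply_eq_some (hτ (hmem _)) (htr _ _ _ hd)
  have hq : sup .q = false := by
    cases hq : sup .q
    · rfl
    · have hs0 : sup .s0 = true := by
        simpa [Bool.le_iff_imp, hq] using noRise (s := .s0) (e := .h) rfl
      have := htr .s0 .k .s1 rfl
      rw [hs0, ← hq, hk] at this
      cases this
  have ht0 : ∀ i, sup (.t i 0) = true := by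
    intro i
    by_contra h0
    have := htr (.t i 0) .k (.t i 8) (by simp [Aphi])
    rw [Bool.not_eq_true] at h0
    rw [h0, ← hq, hk] at this
    cases this
  have ht5 : ∀ i, sup (.t i 5) = false := fun i => by
    simpa [hq, Bool.le_iff_imp] using noRise (s := .q) (e := .hc i) rfl
  let path : Fin 4 → Fin 9 := ![0, 1, 2, 5]
  have hstep : ∀ i (p : Fin 3),
      (Aphi X).delta (.t i (path p.castSucc)) (.var (X i p)) = some (.t i (path p.succ)) := by
    intro i p
    fin_cases p <;> simp [Aphi, gadget, path]
  refine ⟨Finset.univ.filter fun v => sig (.var v) = iInp, fun i => ?_⟩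
  have hdrop : ∀ p, sig (.var (X i p)) = iInp ↔
      sup (.t i (path p.castSucc)) = true ∧ sup (.t i (path p.succ)) = false :=
    fun p => eq_iInp_iff_of_apply_eq_some (hτ (hmem _)) (htr _ _ _ (hstep i p))
  simpa only [Finset.coe_filter, Finset.mem_univ, true_and, Set.mem_ofPred_eq, hdrop] using
    Fin.existsUnique_drop (b := fun n => sup (.t i (path n))) (fun p => noRise (hstep i p))
      (ht0 i) (ht5 i)

end KeyRegion

section Regions

variable {m : ℕ} {V : Type} [DecidableEq V] {X : Fin m → Fin 3 → V} {τ : Set Interaction}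

theorem isRegion_Aphi_of {sup : PState m → Bool} {sig : PEvent m V → Interaction}
    (hτ : ∀ e, sig e ∈ τ)
    (hk : sig .k (sup .s0) = some (sup .s1)) (hh : sig .h (sup .s0) = some (sup .q))
    (hr0 : ∀ i, sig (.r i) (sup .s0) = some (sup (.t i 0)))
    (hr8 : ∀ i, sig (.r i) (sup .s1) = some (sup (.t i 8)))
    (hhc : ∀ i, sig (.hc i) (sup .q) = some (sup (.t i 5)))
    (hkt : ∀ i, sig .k (sup (.t i 0)) = some (sup (.t i 8)))
    (hvar : ∀ i p j j', GadgetStep p j j' →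
      sig (.var (X i p)) (sup (.t i j)) = some (sup (.t i j'))) :
    IsRegion (Aphi X) τ sup sig := by
  refine ⟨hτ, ?_⟩
  rintro (_ | _ | _ | ⟨i, j⟩) (_ | _ | i | i | v) s' hd <;> simp only [Aphi] at hd <;>
    try cases hd
  case s0.k => exact hk
  case s0.h => exact hh
  case s0.r => exact hr0 i
  case s1.r => exact hr8 i
  case q.hc => exact hhc i
  case t.k =>
    split_ifs at hd with hj
    cases hd; subst hj; exact hkt i
  case t.var =>
    obtain ⟨p, j', rfl, rfl, hstep⟩ := gadget_eq_some hd
    exact hvar i p j j' hstep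

def dropSup (X : Fin m → Fin 3 → V) (W : Finset V) (qb : Bool) : PState m → Bool
  | .s0 => true
  | .s1 => false
  | .q => qb
  | .t i j => decide (j ≠ 8 ∧ ∀ p, X i p ∈ W → p ∉ gadgetVertex j)

def dropSig (X : Fin m → Fin 3 → V) (W : Finset V) (qb : Bool) : PEvent m V → Interaction
  | .k => iInp
  | .h => if qb then iNop else iInp
  | .hc i => if qb ∧ ∃ p, X i p ∈ W then iInp else iNop
  | .r _ => iNop
  | .var v => if v ∈ W then iInp else iNop

theorem isRegion_drop (hnop : iNop ∈ τ) (hinp : iInp ∈ τ) {W : Finset V} {qb : Bool}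
    (hW : ∀ i a b, X i a ∈ W → X i b ∈ W → a = b)
    (hq : qb = false → ∀ i, ∃ p, X i p ∈ W) :
    IsRegion (Aphi X) τ (dropSup X W qb) (dropSig X W qb) := by
  apply isRegion_Aphi_of
  · rintro (_ | _ | _ | _ | _) <;> simp only [dropSig] <;> (try split_ifs) <;> assumption
  · rfl
  · cases qb <;> rfl
  · intro i; simp [dropSup, dropSig, iNop, gadgetVertex]
  · intro i; simp [dropSup, dropSig, iNop]
  · intro i
    cases qb
    · simpa [dropSup, dropSig, iNop, gadgetVertex] using hq rfl i
    · by_cases hi : ∃ p, X i p ∈ W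
      · simp [dropSup, dropSig, iInp, gadgetVertex, hi]
      · push Not at hi
        simp [dropSup, dropSig, iNop, gadgetVertex, hi]
  · intro i; simp [dropSup, dropSig, iInp, gadgetVertex]
  · rintro i p j j' ⟨hj, hj', hpj, hvj'⟩
    by_cases hp : X i p ∈ W
    · have hsrc : dropSup X W qb (.t i j) = true := by
        simpa [dropSup, hj] using fun p' hp' => hW i p' p hp' hp ▸ hpj
      have htgt : dropSup X W qb (.t i j') = false := by
        simpa [dropSup, hvj'] using fun _ => ⟨p, hp, by simp⟩
      simp [dropSig, hp, hsrc, htgt, iInp]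
    · have hsame : ∀ p', X i p' ∈ W → (p' ∈ gadgetVertex j' ↔ p' ∈ gadgetVertex j) := by
        intro p' hp'
        rw [hvj', Finset.mem_insert, or_iff_right (by rintro rfl; exact hp hp')]
      simp only [dropSig, hp, if_false, iNop, dropSup, Option.some.injEq, decide_eq_decide]
      exact and_congr (iff_of_true hj hj')
        (forall₂_congr fun p' hp' => not_congr (hsame p' hp')).symm

def clauseSup (C : Finset (Fin m)) (qb : Bool) : PState m → Bool
  | .s0 | .s1 => true
  | .q => qb
  | .t i _ => decide (i ∉ C)

def clauseSig (X : Fin m → Fin 3 → V) (C : Finset (Fin m)) (qb : Bool) :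
    PEvent m V → Interaction
  | .k => iNop
  | .h => if qb then iNop else iInp
  | .hc i => if i ∈ C then (if qb then iInp else iFree) else iNop
  | .r i => if i ∈ C then iInp else iNop
  | .var v => if ∀ i p, X i p = v → i ∈ C then iFree else iNop

theorem isRegion_clause (hnop : iNop ∈ τ) (hinp : iInp ∈ τ) (hfree : iFree ∈ τ)
    {C : Finset (Fin m)} {qb : Bool} (hq : qb = false → C = Finset.univ) :
    IsRegion (Aphi X) τ (clauseSup C qb) (clauseSig X C qb) := by
  apply isRegion_Aphi_of
  · rintro (_ | _ | _ | _ | _) <;> simp only [clauseSig] <;> (try split_ifs) <;> assumption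
  · rfl
  · cases qb <;> rfl
  · intro i; by_cases hi : i ∈ C <;> simp [clauseSup, clauseSig, iNop, iInp, hi]
  · intro i; by_cases hi : i ∈ C <;> simp [clauseSup, clauseSig, iNop, iInp, hi]
  · intro i
    cases qb
    · simp [clauseSup, clauseSig, iFree, hq rfl]
    · by_cases hi : i ∈ C <;> simp [clauseSup, clauseSig, iNop, iInp, hi]
  · intro i; simp [clauseSup, clauseSig, iNop]
  · intro i p j j' _
    by_cases hv : ∀ i' p', X i' p' = X i p → i' ∈ C
    · simp only [clauseSup, clauseSig, if_pos hv, hv i p rfl]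
      rfl
    · simp only [clauseSup, clauseSig, if_neg hv, iNop]

lemma isRegion_drop_singleton (hX : ∀ i, Function.Injective (X i)) (hnop : iNop ∈ τ)
    (hinp : iInp ∈ τ) (v : V) : IsRegion (Aphi X) τ (dropSup X {v} true) (dropSig X {v} true) :=
  isRegion_drop hnop hinp
    (fun i _ _ ha hb => hX i ((Finset.mem_singleton.1 ha).trans (Finset.mem_singleton.1 hb).symm))
    (by simp)

lemma dropSup_singleton_t {i : Fin m} (hX : Function.Injective (X i)) (p : Fin 3) (qb : Bool)
    (j : Fin 9) : dropSup X {X i p} qb (.t i j) = decide (j ≠ 8 ∧ p ∉ gadgetVertex j) := by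
  simp [dropSup, hX.eq_iff]

end Regions

section Feasibility

variable {m : ℕ} {V : Type} [DecidableEq V] {X : Fin m → Fin 3 → V} {τ : Set Interaction}

lemma inhibitable_k_t (hX : ∀ i, Function.Injective (X i)) (hnop : iNop ∈ τ)
    (hinp : iInp ∈ τ) {i : Fin m} {j : Fin 9} (hj : j ≠ 0) :
    Inhibitable (Aphi X) τ .k (.t i j) := by
  by_cases h8 : j = 8
  · exact ⟨_, _, isRegion_drop hnop hinp (W := ∅) (qb := true) (by simp) (by simp),
      by simp [dropSup, dropSig, h8, iInp]⟩
  · obtain ⟨p, hp⟩ : (gadgetVertex j).Nonempty :=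
      Finset.nonempty_iff_ne_empty.2 fun h => hj (gadgetVertex_inj h8 (by decide) h)
    exact ⟨_, _, isRegion_drop_singleton hX hnop hinp (X i p),
      by simp [dropSup_singleton_t (hX i), dropSig, hp, iInp]⟩

lemma inhibitable_var_t (hX : ∀ i, Function.Injective (X i)) (hnop : iNop ∈ τ)
    (hinp : iInp ∈ τ) (hfree : iFree ∈ τ) {i : Fin m} {j : Fin 9} {v : V}
    (hd : gadget X i j v = none) :
    Inhibitable (Aphi X) τ (.var v) (.t i j) := by
  by_cases hv : ∃ p, X i p = v
  · obtain ⟨p, rfl⟩ := hv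
    have hlevel : ¬(j ≠ 8 ∧ p ∉ gadgetVertex j) := fun ⟨hj, hp⟩ =>
      gadget_ne_none (hX i) hj hp hd
    exact ⟨_, _, isRegion_drop_singleton hX hnop hinp (X i p),
      by simp [dropSup_singleton_t (hX i), dropSig, hlevel, iInp]⟩
  · refine ⟨_, _, isRegion_clause hnop hinp hfree
      (C := Finset.univ.filter fun i' => ∃ p, X i' p = v) (qb := true) (by simp), ?_⟩
    rw [clauseSig, if_pos fun i' p h => Finset.mem_filter.2 ⟨Finset.mem_univ _, p, h⟩]
    simp [clauseSup, hv, iFree]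

lemma separable_t_t (hX : ∀ i, Function.Injective (X i)) (hnop : iNop ∈ τ) (hinp : iInp ∈ τ)
    (hfree : iFree ∈ τ) {i i' : Fin m} {j j' : Fin 9} (hne : PState.t i j ≠ .t i' j') :
    Separable (Aphi X) τ (.t i j) (.t i' j') := by
  by_cases hi : i = i'
  · subst hi
    have hj : j ≠ j' := fun h => hne (h ▸ rfl)
    by_cases h8 : j = 8 ∨ j' = 8
    · refine ⟨_, _, isRegion_drop hnop hinp (W := ∅) (qb := true) (by simp) (by simp), ?_⟩
      rcases h8 with rfl | rfl <;> simp [dropSup, hj, hj.symm]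
    · push Not at h8
      obtain ⟨p, hp⟩ : ∃ p, ¬(p ∈ gadgetVertex j ↔ p ∈ gadgetVertex j') := by
        by_contra! h
        exact hj (gadgetVertex_inj h8.1 h8.2 (Finset.ext h))
      refine ⟨_, _, isRegion_drop_singleton hX hnop hinp (X i p), ?_⟩
      simpa [dropSup_singleton_t (hX i), h8] using hp
  · refine ⟨_, _, isRegion_clause hnop hinp hfree (C := {i}) (qb := true) (by simp), ?_⟩
    simp [clauseSup, Ne.symm hi]

theorem ssp_Aphi (hX : ∀ i, Function.Injective (X i)) (hτ : {iNop, iInp, iFree} ⊆ τ) :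
    SSP (Aphi X) τ := by
  have hnop : iNop ∈ τ := hτ (by simp)
  have hinp : iInp ∈ τ := hτ (by simp)
  have hfree : iFree ∈ τ := hτ (by simp)
  have hK1 := isRegion_drop (X := X) hnop hinp (W := ∅) (qb := true) (by simp) (by simp)
  have hH := isRegion_clause (X := X) hnop hinp hfree (C := .univ) (qb := false) (fun _ => rfl)
  have hF := isRegion_clause (X := X) hnop hinp hfree (C := .univ) (qb := true) (by simp)
  intro s s' hne
  rcases s with _ | _ | _ | ⟨i, j⟩ <;> rcases s' with _ | _ | _ | ⟨i', j'⟩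
  all_goals first
    | exact absurd rfl hne
    | (refine ⟨_, _, hK1, ?_⟩; simp [dropSup]; done)
    | (refine ⟨_, _, hH, ?_⟩; simp [clauseSup]; done)
    | (refine ⟨_, _, hF, ?_⟩; simp [clauseSup]; done)
    | exact separable_t_t hX hnop hinp hfree hne

theorem essp_Aphi (hX : ∀ i, Function.Injective (X i)) (hτ : {iNop, iInp, iFree} ⊆ τ)
    {M : Finset V} (hM : OneInThree X M) : ESSP (Aphi X) τ := by
  have hnop : iNop ∈ τ := hτ (by simp)
  have hinp : iInp ∈ τ := hτ (by simp)
  have hfree : iFree ∈ τ := hτ (by simp)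
  have hK1 := isRegion_drop (X := X) hnop hinp (W := ∅) (qb := true) (by simp) (by simp)
  have hK := isRegion_drop (X := X) hnop hinp (W := M) (qb := false)
    (fun i a b ha hb => (hM i).unique ha hb) (fun _ i => (hM i).exists)
  have hH := isRegion_clause (X := X) hnop hinp hfree (C := .univ) (qb := false) (fun _ => rfl)
  have hF := isRegion_clause (X := X) hnop hinp hfree (C := .univ) (qb := true) (by simp)
  intro s e hd
  cases s <;> cases e <;> simp only [Aphi, reduceCtorEq] at hd
  case s1.k => exact ⟨_, _, hK1, by simp [dropSup, dropSig, iInp]⟩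
  case s1.h | q.k | q.h => exact ⟨_, _, hK, by simp [dropSup, dropSig, iInp]⟩
  case s0.hc | s1.hc | q.r | t.h | t.r =>
    exact ⟨_, _, hH, by simp [clauseSup, clauseSig, iFree, iInp]⟩
  case s0.var | s1.var | q.var | t.hc =>
    exact ⟨_, _, hF, by simp [clauseSup, clauseSig, iFree, iInp]⟩
  case t.k => exact inhibitable_k_t hX hnop hinp (by simpa using hd)
  case t.var => exact inhibitable_var_t hX hnop hinp hfree hd

end Feasibility

/-- if k is τ-inhibitable at q in A_φ then A_φ has the τ-ESSP and
the τ-SSP, for τ = {nop, inp, free} or τ = {nop, inp, used, free}. -/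
theorem key_inhibitable_implies_essp_ssp {m : ℕ} {V : Type} [DecidableEq V] [Fintype V]
    (X : Fin m → Fin 3 → V) (hcubic : CubicMonotone X)
    (τ : Set Interaction)
    (hτ : τ = {iNop, iInp, iFree} ∨ τ = {iNop, iInp, iUsed, iFree})
    (hkey : Inhibitable (Aphi X) τ PEvent.k PState.q) :
    ESSP (Aphi X) τ ∧ SSP (Aphi X) τ := by
  have hτ' : {iNop, iInp, iFree} ⊆ τ ∧ τ ⊆ {iNop, iInp, iUsed, iFree} := by
    rcases hτ with rfl | rfl <;> constructor <;> intro f hf <;>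
      simp only [Set.mem_insert_iff, Set.mem_singleton_iff] at hf ⊢ <;> tauto
  obtain ⟨M, hM⟩ := exists_oneInThree_of_inhibitable_key hτ'.2 hkey
  exact ⟨essp_Aphi hcubic.1 hτ'.1 hM, ssp_Aphi hcubic.1 hτ'.1⟩
end
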